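/- If π(p) = π(q) for p, q ∈ S³, where π is the Hopf map π(p) = p̃·p on unit quaternions, then there exists θ ∈ ℝ such that q = (cos θ + i sin θ)·p. Thus the fibers of π are exactly the orbits of the circle action p ↦ (cos θ + i sin θ)·p. -/

import Mathlib

/-- The quaternion `x₀ + x₁ i + x₂ j + x₃ k`. -/
def qmk (a b c d : ℝ) : Quaternion ℝ := ⟨a, b, c, d⟩

/-- The anti-automorphism of `ℍ` fixing `1, j, k` and sending `i` to `-i`. -/
def qtilde (x : Quaternion ℝ) : Quaternion ℝ := ⟨x.re, -x.imI, x.imJ, x.imK⟩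

lemma qtilde_mul (x y : Quaternion ℝ) : qtilde (x * y) = qtilde y * qtilde x := by
  ext <;>
  simp only [Quaternion.re_mul, Quaternion.imI_mul, Quaternion.imJ_mul,
    Quaternion.imK_mul] <;> simp [qtilde, Quaternion.re_mul, Quaternion.imI_mul, Quaternion.imJ_mul,
    Quaternion.imK_mul] <;> ring

/-- The fibers of the Hopf map `π(p) = p̃ · p` on unit quaternions are exactly the orbits of
the circle action by left multiplication by `cos θ + i sin θ`. -/
theorem stmt_3 (p q : Quaternion ℝ) (hp : ‖p‖ = 1) (hq : ‖q‖ = 1)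
    (h : qtilde p * p = qtilde q * q) :
    ∃ θ : ℝ, q = qmk (Real.cos θ) (Real.sin θ) 0 0 * p := by
  have hp0 : p ≠ 0 := by
    intro h0; rw [h0, norm_zero] at hp; norm_num at hp
  have hps : star p * p = 1 := by
    rw [Quaternion.star_mul_self]
    have : Quaternion.normSq p = 1 := by
      have := Quaternion.normSq_eq_norm_mul_self p
      rw [hp] at this; simpa using this
    rw [this]; norm_num
  set u : Quaternion ℝ := q * star p with hu_def
  have hqu : q = u * p := by
    rw [hu_def, mul_assoc, hps, mul_one]
  have hnu : ‖u‖ = 1 := by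
    rw [hu_def, norm_mul, norm_star, hp, hq]; norm_num
  have htp0 : qtilde p ≠ 0 := by
    intro h0
    apply hp0
    have : qtilde (qtilde p) = qtilde 0 := by rw [h0]
    simpa [qtilde, Quaternion.ext_iff, QuaternionAlgebra.mk.injEq, Quaternion.re_zero,
      Quaternion.imI_zero, Quaternion.imJ_zero, Quaternion.imK_zero] using
      congrArg (fun x => (x.re, x.imI, x.imJ, x.imK)) this
  have hu1 : qtilde u * u = 1 := by
    have h1 : qtilde p * (qtilde u * u * p) = qtilde p * p := by
      calc qtilde p * (qtilde u * u * p) = qtilde (u * p) * (u * p) := by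
            rw [qtilde_mul u p]; simp only [mul_assoc]
        _ = qtilde q * q := by rw [← hqu]
        _ = qtilde p * p := h.symm
    have h2 : qtilde u * u * p = p := mul_left_cancel₀ htp0 h1
    have h3 : qtilde u * u * p = 1 * p := by rw [h2, one_mul]
    exact mul_right_cancel₀ hp0 h3
  -- componentwise analysis of u
  have hnsq : u.re ^ 2 + u.imI ^ 2 + u.imJ ^ 2 + u.imK ^ 2 = 1 := by
    have h1 : Quaternion.normSq u = 1 := by
      have := Quaternion.normSq_eq_norm_mul_self u
      rw [hnu] at this; simpa using this
    rw [Quaternion.normSq_def'] at h1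
    linarith [h1]
  have hre : u.re ^ 2 + u.imI ^ 2 - u.imJ ^ 2 - u.imK ^ 2 = 1 := by
    have := congrArg QuaternionAlgebra.re hu1
    simp only [Quaternion.re_mul] at this
    simp [qtilde, Quaternion.re_one] at this
    nlinarith [this]
  have hJ : u.imJ = 0 := by nlinarith [sq_nonneg u.imJ, sq_nonneg u.imK]
  have hK : u.imK = 0 := by nlinarith [sq_nonneg u.imJ, sq_nonneg u.imK]
  have hab : u.re ^ 2 + u.imI ^ 2 = 1 := by nlinarith
  -- find θ
  set z : ℂ := ⟨u.re, u.imI⟩ with hz_def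
  have hzabs : ‖z‖ = 1 := by
    rw [Complex.norm_def, Complex.normSq_apply]
    simp only [hz_def]
    rw [show u.re * u.re + u.imI * u.imI = 1 by nlinarith]
    exact Real.sqrt_one
  have hz0 : z ≠ 0 := by
    intro h0; rw [h0] at hzabs; simp at hzabs
  refine ⟨Complex.arg z, ?_⟩
  have hcos : Real.cos (Complex.arg z) = u.re := by
    rw [Complex.cos_arg hz0, hzabs]; simp [hz_def]
  have hsin : Real.sin (Complex.arg z) = u.imI := by
    rw [Complex.sin_arg, hzabs]; simp [hz_def]
  have hu_eq : qmk (Real.cos (Complex.arg z)) (Real.sin (Complex.arg z)) 0 0 = u := by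
    rw [hcos, hsin]
    ext <;> simp [qmk, hJ, hK]
  rw [hu_eq]; exact hqu
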